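/- arXiv:2212.13786 — 3 statements merged into one kernel-verified Lean document; each statement's English description precedes it below -/
import Mathlib

section
/- Let R be a ring and M a left R-module, and assume that M is an Artinian module or that R is a left Artinian ring. Then the following are equivalent: (1) M is a square-free module; (2) soc(M) is a square-free module; (3) soc(M) is a distributive module; (4) soc(M) is zero or a direct sum of pairwise non-isomorphic simple modules. -/
open DirectSum

universe u v

section Defs

variable (R : Type u) [Ring R]

/-- The socle of a module: the sum of all simple submodules. -/
def moduleSocle (M : Type v) [AddCommGroup M] [Module R M] : Submodule R M :=
  sSup {S : Submodule R M | IsSimpleModule R S}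

/-- A module is square-free if it does not contain a direct sum of two nonzero
isomorphic submodules. -/
def IsSquareFreeModule (M : Type v) [AddCommGroup M] [Module R M] : Prop :=
  ¬ ∃ (A B : Submodule R M), A ≠ ⊥ ∧ B ≠ ⊥ ∧ A ⊓ B = ⊥ ∧ Nonempty (A ≃ₗ[R] B)

/-- A module is distributive if its lattice of submodules is distributive. -/
def IsDistributiveModule (M : Type v) [AddCommGroup M] [Module R M] : Prop :=
  ∀ A B C : Submodule R M, A ⊓ (B ⊔ C) = (A ⊓ B) ⊔ (A ⊓ C)

/-- A module is cyclic if it is generated by a single element. -/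
def IsCyclicModule (M : Type v) [AddCommGroup M] [Module R M] : Prop :=
  ∃ x : M, Submodule.span R {x} = ⊤

/-- The radical of a module: the intersection of all maximal submodules. -/
def moduleRadical (M : Type v) [AddCommGroup M] [Module R M] : Submodule R M :=
  sInf {N : Submodule R M | IsCoatom N}

/-- A submodule is essential if it intersects every nonzero submodule nontrivially. -/
def IsEssentialSubmodule {M : Type v} [AddCommGroup M] [Module R M]
    (N : Submodule R M) : Prop :=
  ∀ K : Submodule R M, K ≠ ⊥ → N ⊓ K ≠ ⊥

/-- `M` is an internal direct sum of submodules each satisfying `P`. -/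
def IsDirectSumOf (M : Type v) [AddCommGroup M] [Module R M]
    (P : Submodule R M → Prop) : Prop :=
  ∃ (ι : Type v) (N : ι → Submodule R M), iSupIndep N ∧ iSup N = ⊤ ∧ ∀ i, P (N i)

/-- An indecomposable module: nonzero, and not the direct sum of two proper submodules. -/
def IsIndecomposableModule (M : Type v) [AddCommGroup M] [Module R M] : Prop :=
  Nontrivial M ∧ ∀ A B : Submodule R M, IsCompl A B → A = ⊥ ∨ B = ⊥

/-- A uniform module: nonzero, and any two nonzero submodules intersect nontrivially. -/
def IsUniformModule (M : Type v) [AddCommGroup M] [Module R M] : Prop :=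
  Nontrivial M ∧ ∀ A B : Submodule R M, A ≠ ⊥ → B ≠ ⊥ → A ⊓ B ≠ ⊥

/-- A uniserial module: submodules are linearly ordered by inclusion. -/
def IsUniserialModule (M : Type v) [AddCommGroup M] [Module R M] : Prop :=
  ∀ A B : Submodule R M, A ≤ B ∨ B ≤ A

/-- A co-cyclic module: it has a simple submodule contained in every nonzero submodule. -/
def IsCocyclicModule (M : Type v) [AddCommGroup M] [Module R M] : Prop :=
  ∃ S : Submodule R M, IsSimpleModule R S ∧ ∀ N : Submodule R M, N ≠ ⊥ → S ≤ N

/-- An extending (CS) module: every submodule is essential in a direct summand. -/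
def IsExtendingModule (M : Type v) [AddCommGroup M] [Module R M] : Prop :=
  ∀ N : Submodule R M, ∃ D D' : Submodule R M, IsCompl D D' ∧ N ≤ D ∧
    ∀ K : Submodule R M, K ≤ D → K ≠ ⊥ → N ⊓ K ≠ ⊥

/-- A local module: its radical is a maximal submodule. -/
def IsLocalModule (M : Type v) [AddCommGroup M] [Module R M] : Prop :=
  IsCoatom (moduleRadical R M)

/-- `M` has length `n`: there is a composition series of length `n` from `⊥` to `⊤`. -/
def ModuleLengthEq (M : Type v) [AddCommGroup M] [Module R M] (n : ℕ) : Prop :=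
  ∃ f : Fin (n + 1) → Submodule R M, f 0 = ⊥ ∧ f (Fin.last n) = ⊤ ∧
    ∀ i : Fin n, f i.castSucc ⋖ f i.succ

end Defs

/-- A ring is of finite representation type if it is left Artinian and there are, up to
isomorphism, only finitely many finitely generated indecomposable left modules. -/
def IsFiniteRepresentationType (R : Type u) [Ring R] : Prop :=
  IsArtinianRing R ∧ ∃ s : Set (ModuleCat.{u} R), s.Finite ∧
    ∀ M : ModuleCat.{u} R, Module.Finite R M → IsIndecomposableModule R M →
      ∃ N ∈ s, Nonempty (M ≃ₗ[R] N)

/-- A semiperfect ring: `R/J(R)` is semisimple and idempotents lift modulo `J(R)`. -/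
def IsSemiperfectRing (R : Type u) [Ring R] : Prop :=
  IsSemisimpleModule R (R ⧸ moduleRadical R R) ∧
    ∀ x : R, x * x - x ∈ moduleRadical R R →
      ∃ e : R, e * e = e ∧ e - x ∈ moduleRadical R R

/-- A left pure semisimple ring: every left module is a direct sum of finitely
generated modules. -/
def IsLeftPureSemisimpleRing (R : Type u) [Ring R] : Prop :=
  ∀ (M : Type u) [AddCommGroup M] [Module R M],
    IsDirectSumOf R M (fun N => Module.Finite R ↥N)

/-- A left Köthe ring: every left module is a direct sum of cyclic modules. -/
def IsLeftKotheRing (R : Type u) [Ring R] : Prop :=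
  ∀ (M : Type u) [AddCommGroup M] [Module R M],
    IsDirectSumOf R M (fun N => IsCyclicModule R ↥N)

/-- A very strongly left Köthe ring: every nonzero left module is a direct sum of
modules with simple top. -/
def IsVeryStronglyLeftKotheRing (R : Type u) [Ring R] : Prop :=
  ∀ (M : Type u) [AddCommGroup M] [Module R M], Nontrivial M →
    IsDirectSumOf R M (fun N => IsSimpleModule R (↥N ⧸ moduleRadical R ↥N))

/-- A left quasi-duo ring: every maximal left ideal is a two-sided ideal. -/
def IsLeftQuasiDuoRing (R : Type u) [Ring R] : Prop :=
  ∀ I : Submodule R R, IsCoatom I → ∀ x ∈ I, ∀ r : R, x * r ∈ I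

/-- A submodule of `R` (i.e. a left ideal) is a two-sided ideal. -/
def IsTwoSidedIdealSub (R : Type u) [Ring R] (I : Submodule R R) : Prop :=
  ∀ x ∈ I, ∀ r : R, x * r ∈ I

/-- A maximal two-sided ideal. -/
def IsMaximalTwoSidedIdeal (R : Type u) [Ring R] (I : Submodule R R) : Prop :=
  IsTwoSidedIdealSub R I ∧ I ≠ ⊤ ∧
    ∀ J : Submodule R R, IsTwoSidedIdealSub R J → I < J → J = ⊤

/-- The product of two (two-sided) ideals of `R`. -/
def idealProd (R : Type u) [Ring R] (I J : Submodule R R) : Submodule R R :=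
  Submodule.span R {x : R | ∃ a ∈ I, ∃ b ∈ J, x = a * b}

/-- The product of any two maximal two-sided ideals of `R` commutes. -/
def MaximalIdealsCommute (R : Type u) [Ring R] : Prop :=
  ∀ I J : Submodule R R, IsMaximalTwoSidedIdeal R I → IsMaximalTwoSidedIdeal R J →
    idealProd R I J = idealProd R J I

/-- Morita equivalence of rings: their module categories are equivalent. -/
def IsMoritaEquivalentRings (R S : Type u) [Ring R] [Ring S] : Prop :=
  Nonempty (ModuleCat.{u} R ≌ ModuleCat.{u} S)

/-- A left Kawada ring: every ring Morita equivalent to it is a left Köthe ring. -/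
def IsLeftKawadaRing (R : Type u) [Ring R] : Prop :=
  ∀ (S : Type u) [Ring S], IsMoritaEquivalentRings R S → IsLeftKotheRing S

section MyAux

variable {R : Type u} [Ring R] {M : Type v} [AddCommGroup M] [Module R M]

lemma myDistToSF (h : IsDistributiveModule R M) : IsSquareFreeModule R M := by
  rintro ⟨A, B, hA, hB, hAB, ⟨f⟩⟩
  set g : ↥A →ₗ[R] M := A.subtype + B.subtype ∘ₗ (f : ↥A →ₗ[R] ↥B) with hg
  set D : Submodule R M := LinearMap.range g with hD
  have hAD : A ⊓ D = ⊥ := by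
    rw [eq_bot_iff]
    rintro x hx
    obtain ⟨hxA, a, rfl⟩ := Submodule.mem_inf.mp hx
    have h1 : (g a : M) - (a : M) = ((f a : ↥B) : M) := by
      simp [hg]
    have h2 : ((f a : ↥B) : M) ∈ A ⊓ B := by
      refine Submodule.mem_inf.mpr ⟨?_, (f a).2⟩
      rw [← h1]
      exact sub_mem hxA a.2
    rw [hAB] at h2
    have hfa : f a = 0 := Subtype.ext h2
    have ha : a = 0 := by
      apply f.injective
      simp [hfa]
    simp [hg, ha]
  have hALE : A ≤ B ⊔ D := by
    intro x hx
    have hxeq : x = (-((f ⟨x, hx⟩ : ↥B) : M)) + g ⟨x, hx⟩ := by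
      simp [hg]
    rw [hxeq]
    exact Submodule.add_mem _ (Submodule.mem_sup_left (neg_mem (f ⟨x, hx⟩).2))
      (Submodule.mem_sup_right ⟨_, rfl⟩)
  have h3 := h A B D
  rw [inf_eq_left.mpr hALE, hAB, hAD, sup_bot_eq] at h3
  exact hA h3

lemma myExistsSimple (h : IsArtinian R M ∨ IsArtinianRing R) (A : Submodule R M) (hA : A ≠ ⊥) :
    ∃ T : Submodule R M, T ≤ A ∧ IsSimpleModule R ↥T := by
  obtain ⟨a, haA, ha0⟩ := (Submodule.ne_bot_iff A).mp hA
  rcases h with hM | hR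
  · rcases eq_bot_or_exists_atom_le A with h' | ⟨T, hT, hTA⟩
    · exact absurd h' hA
    · exact ⟨T, hTA, isSimpleModule_iff_isAtom.mpr hT⟩
  · haveI : IsArtinianRing R := hR
    set W : Submodule R M := LinearMap.range (LinearMap.toSpanSingleton R M a) with hWdef
    haveI : IsArtinian R ↥W := isArtinian_range _
    have haW : a ∈ W := ⟨1, by simp⟩
    have hW : W ≤ A := by
      rintro x ⟨r, rfl⟩
      simpa using A.smul_mem r haA
    haveI : Nontrivial ↥W := ⟨⟨⟨a, haW⟩, 0, by simp [Subtype.ext_iff, ha0]⟩⟩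
    obtain ⟨T', hT'⟩ := IsAtomic.exists_atom (Submodule R ↥W)
    refine ⟨T'.map W.subtype, (Submodule.map_subtype_le W T').trans hW, ?_⟩
    haveI := isSimpleModule_iff_isAtom.mpr hT'
    exact IsSimpleModule.congr (Submodule.equivMapOfInjective W.subtype W.injective_subtype T').symm

lemma mySFsub (hM : IsSquareFreeModule R M) (N : Submodule R M) :
    IsSquareFreeModule R ↥N := by
  rintro ⟨A, B, hA, hB, hAB, ⟨f⟩⟩
  have hinj := N.injective_subtype
  refine hM ⟨A.map N.subtype, B.map N.subtype, ?_, ?_, ?_, ?_⟩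
  · intro hbot
    exact hA (Submodule.map_injective_of_injective hinj (by rw [hbot, Submodule.map_bot]))
  · intro hbot
    exact hB (Submodule.map_injective_of_injective hinj (by rw [hbot, Submodule.map_bot]))
  · rw [← Submodule.map_inf _ hinj, hAB, Submodule.map_bot]
  · exact ⟨((Submodule.equivMapOfInjective N.subtype hinj A).symm.trans f).trans
      (Submodule.equivMapOfInjective N.subtype hinj B)⟩

lemma mySocSemisimple : IsSemisimpleModule R ↥(moduleSocle R M) := by
  have h : ∀ m ∈ {m : Submodule R M | IsSimpleModule R ↥m}, IsSemisimpleModule R ↥m :=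
    fun m hm => by haveI : IsSimpleModule R ↥m := hm; infer_instance
  have := isSemisimpleModule_biSup_of_isSemisimpleModule_submodule h
  rwa [← sSup_eq_iSup] at this

lemma mySimpleEq {ι : Type*} [DecidableEq ι] {S : ι → Submodule R M} (hInd : iSupIndep S)
    (hSup : iSup S = ⊤) (hSimple : ∀ i, IsSimpleModule R ↥(S i))
    (hNiso : ∀ i j, i ≠ j → ¬ Nonempty (↥(S i) ≃ₗ[R] ↥(S j)))
    {J : Set ι} {T : Submodule R M} (hT : IsSimpleModule R ↥T)
    (hTJ : T ≤ ⨆ i ∈ J, S i) : ∃ i ∈ J, T = S i := by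
  have hInt : DirectSum.IsInternal S :=
    DirectSum.isInternal_submodule_of_iSupIndep_of_iSup_eq_top hInd hSup
  set E := LinearEquiv.ofBijective (DirectSum.coeLinearMap S) hInt with hE
  let proj : ∀ i, M →ₗ[R] ↥(S i) := fun i =>
    (DirectSum.component R ι (fun i => ↥(S i)) i) ∘ₗ (E.symm : M →ₗ[R] ⨁ i, ↥(S i))
  have proj_apply : ∀ i x, proj i x = E.symm x i := fun i x => rfl
  have proj_self : ∀ (i : ι) (y : ↥(S i)), proj i (y : M) = y := fun i y =>
    hInt.ofBijective_coeLinearMap_same y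
  have proj_ne : ∀ {i j : ι}, i ≠ j → ∀ (y : ↥(S i)), proj j (y : M) = 0 := fun hij y =>
    hInt.ofBijective_coeLinearMap_of_ne hij y
  have mem_of : ∀ (i : ι) (x : M), (∀ j, j ≠ i → proj j x = 0) → x ∈ S i := by
    intro i x hx
    have hsymm : E.symm x = DirectSum.of (fun i => ↥(S i)) i (proj i x) := by
      refine DirectSum.ext_component R fun j => ?_
      rw [← DirectSum.apply_eq_component, ← DirectSum.apply_eq_component]
      by_cases hji : j = i
      · subst hji
        rw [DirectSum.of_eq_same]
        exact (proj_apply j x).symm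
      · rw [DirectSum.of_eq_of_ne _ _ _ hji]
        rw [← proj_apply]
        exact hx j hji
    have hx2 : x = E (E.symm x) := (E.apply_symm_apply x).symm
    rw [hsymm] at hx2
    have : E (DirectSum.of (fun i => ↥(S i)) i (proj i x)) = ((proj i x : ↥(S i)) : M) := by
      rw [hE]
      exact DirectSum.coeLinearMap_of S i (proj i x)
    rw [this] at hx2
    rw [hx2]
    exact (proj i x).2
  have hTatom := isSimpleModule_iff_isAtom.mp hT
  obtain ⟨x, hxT, hx0⟩ := (Submodule.ne_bot_iff T).mp hTatom.1
  have hxproj : ∃ i, proj i x ≠ 0 := by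
    by_contra hall
    push_neg at hall
    have h0 : E.symm x = 0 := by
      refine DirectSum.ext_component R fun i => ?_
      rw [← DirectSum.apply_eq_component, ← DirectSum.apply_eq_component, ← proj_apply]
      simp [hall i]
    apply hx0
    have := congrArg E h0
    simpa using this
  obtain ⟨i0, hi0⟩ := hxproj
  have hi0J : i0 ∈ J := by
    by_contra hi0J
    apply hi0
    have hker : (⨆ i ∈ J, S i) ≤ LinearMap.ker (proj i0) := by
      refine iSup₂_le fun j hj => ?_
      intro y hy
      have : j ≠ i0 := fun hji => hi0J (hji ▸ hj)
      exact proj_ne this ⟨y, hy⟩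
    exact hker (hTJ hxT)
  set f : ∀ i, ↥T →ₗ[R] ↥(S i) := fun i => (proj i) ∘ₗ T.subtype with hf
  have hbij : ∀ i, f i ≠ 0 → Function.Bijective (f i) := by
    intro i hfi
    constructor
    · rw [← LinearMap.ker_eq_bot]
      haveI := hT
      rcases eq_bot_or_eq_top (LinearMap.ker (f i)) with h' | h'
      · exact h'
      · exact absurd (LinearMap.ker_eq_top.mp h') hfi
    · rw [← LinearMap.range_eq_top]
      haveI := hSimple i
      rcases eq_bot_or_eq_top (LinearMap.range (f i)) with h' | h'
      · exact absurd (LinearMap.range_eq_bot.mp h') hfi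
      · exact h'
  have hfi0 : f i0 ≠ 0 := by
    intro h0
    apply hi0
    have : f i0 ⟨x, hxT⟩ = 0 := by rw [h0]; rfl
    simpa [hf] using this
  have hfj : ∀ j, j ≠ i0 → f j = 0 := by
    intro j hj
    by_contra hfj
    exact hNiso i0 j (Ne.symm hj)
      ⟨((LinearEquiv.ofBijective (f i0) (hbij i0 hfi0)).symm.trans
        (LinearEquiv.ofBijective (f j) (hbij j hfj)))⟩
  have hTle : T ≤ S i0 := by
    intro y hy
    refine mem_of i0 y fun j hj => ?_
    have : f j ⟨y, hy⟩ = 0 := by rw [hfj j hj]; rfl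
    simpa [hf] using this
  have hSatom := isSimpleModule_iff_isAtom.mp (hSimple i0)
  refine ⟨i0, hi0J, ?_⟩
  rcases (hSatom.le_iff.mp hTle) with h' | h'
  · exact absurd h' hTatom.1
  · exact h'

lemma myDecomp [IsSemisimpleModule R M] {ι : Type*} [DecidableEq ι] {S : ι → Submodule R M}
    (hInd : iSupIndep S) (hSup : iSup S = ⊤) (hSimple : ∀ i, IsSimpleModule R ↥(S i))
    (hNiso : ∀ i j, i ≠ j → ¬ Nonempty (↥(S i) ≃ₗ[R] ↥(S j)))
    (W : Submodule R M) : W = ⨆ i ∈ {i : ι | S i ≤ W}, S i := by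
  refine le_antisymm ?_ (iSup₂_le fun i hi => hi)
  conv_lhs => rw [← IsSemisimpleModule.sSup_simples_le W]
  refine sSup_le ?_
  rintro T ⟨hT, hTW⟩
  obtain ⟨i, -, hTi⟩ := mySimpleEq hInd hSup hSimple hNiso (J := Set.univ) hT
    (by rw [iSup_univ, hSup]; exact le_top)
  rw [hTi] at hTW ⊢
  exact le_biSup S hTW

lemma myDist [IsSemisimpleModule R M] {ι : Type*} [DecidableEq ι] {S : ι → Submodule R M}
    (hInd : iSupIndep S) (hSup : iSup S = ⊤) (hSimple : ∀ i, IsSimpleModule R ↥(S i))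
    (hNiso : ∀ i j, i ≠ j → ¬ Nonempty (↥(S i) ≃ₗ[R] ↥(S j))) :
    IsDistributiveModule R M := by
  intro A B C
  refine le_antisymm ?_ (le_inf (sup_le inf_le_left inf_le_left)
    (sup_le (inf_le_right.trans le_sup_left) (inf_le_right.trans le_sup_right)))
  conv_lhs => rw [myDecomp hInd hSup hSimple hNiso (A ⊓ (B ⊔ C))]
  refine iSup₂_le fun i hi => ?_
  have hiA : S i ≤ A := hi.trans inf_le_left
  have hiBC : S i ≤ B ⊔ C := hi.trans inf_le_right
  have hBC : B ⊔ C = ⨆ j ∈ ({j : ι | S j ≤ B} ∪ {j : ι | S j ≤ C} : Set ι), S j := by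
    rw [iSup_union, ← myDecomp hInd hSup hSimple hNiso B, ← myDecomp hInd hSup hSimple hNiso C]
  obtain ⟨j, hj, hij⟩ := mySimpleEq hInd hSup hSimple hNiso (hSimple i) (hBC ▸ hiBC)
  rcases hj with hjB | hjC
  · exact le_trans (le_inf hiA (hij ▸ hjB)) le_sup_left
  · exact le_trans (le_inf hiA (hij ▸ hjC)) le_sup_right

end MyAux
theorem statement0 (R : Type u) [Ring R] (M : Type v) [AddCommGroup M] [Module R M]
    (h : IsArtinian R M ∨ IsArtinianRing R) :
    List.TFAE [
      IsSquareFreeModule R M,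
      IsSquareFreeModule R ↥(moduleSocle R M),
      IsDistributiveModule R ↥(moduleSocle R M),
      moduleSocle R M = ⊥ ∨
        ∃ (ι : Type v) (S : ι → Submodule R ↥(moduleSocle R M)),
          iSupIndep S ∧ iSup S = ⊤ ∧ (∀ i, IsSimpleModule R ↥(S i)) ∧
          ∀ i j, i ≠ j → ¬ Nonempty (↥(S i) ≃ₗ[R] ↥(S j))
    ] := by
  classical
  tfae_have 1 → 2 := fun h1 => mySFsub h1 _
  tfae_have 3 → 2 := fun h3 => myDistToSF h3
  tfae_have 2 → 1 := by
    intro h2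
    rintro ⟨A, B, hA, hB, hAB, ⟨f⟩⟩
    obtain ⟨T, hTA, hTsimple⟩ := myExistsSimple h A hA
    set T' : Submodule R M :=
      ((T.comap A.subtype).map (f : ↥A →ₗ[R] ↥B)).map B.subtype with hT'def
    have eTsub : ↥(T.comap A.subtype) ≃ₗ[R] ↥T := Submodule.comapSubtypeEquivOfLe hTA
    have e2 : ↥(T.comap A.subtype) ≃ₗ[R] ↥((T.comap A.subtype).map (f : ↥A →ₗ[R] ↥B)) :=
      f.submoduleMap (T.comap A.subtype)
    have e3 : ↥((T.comap A.subtype).map (f : ↥A →ₗ[R] ↥B)) ≃ₗ[R] ↥T' :=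
      Submodule.equivMapOfInjective B.subtype B.injective_subtype _
    have eTT' : ↥T ≃ₗ[R] ↥T' := eTsub.symm.trans (e2.trans e3)
    have hT'simple : IsSimpleModule R ↥T' := by
      haveI := hTsimple
      exact IsSimpleModule.congr eTT'.symm
    have hT'B : T' ≤ B := Submodule.map_subtype_le B _
    have hTT' : T ⊓ T' = ⊥ := by
      rw [eq_bot_iff, ← hAB]
      exact inf_le_inf hTA hT'B
    have hTsoc : T ≤ moduleSocle R M := le_sSup hTsimple
    have hT'soc : T' ≤ moduleSocle R M := le_sSup hT'simple
    set N := moduleSocle R M with hN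
    have hTatom := isSimpleModule_iff_isAtom.mp hTsimple
    have hT'atom := isSimpleModule_iff_isAtom.mp hT'simple
    refine h2 ⟨T.comap N.subtype, T'.comap N.subtype, ?_, ?_, ?_, ⟨?_⟩⟩
    · intro hbot
      apply hTatom.1
      have := congrArg (Submodule.map N.subtype) hbot
      rwa [Submodule.map_comap_subtype, Submodule.map_bot, inf_eq_right.mpr hTsoc] at this
    · intro hbot
      apply hT'atom.1
      have := congrArg (Submodule.map N.subtype) hbot
      rwa [Submodule.map_comap_subtype, Submodule.map_bot, inf_eq_right.mpr hT'soc] at this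
    · rw [← Submodule.comap_inf, hTT', Submodule.comap_bot, Submodule.ker_subtype]
    · exact ((Submodule.comapSubtypeEquivOfLe hTsoc).trans eTT').trans
        ((Submodule.comapSubtypeEquivOfLe hT'soc).symm)
  tfae_have 2 → 4 := by
    intro h2
    right
    haveI : IsSemisimpleModule R ↥(moduleSocle R M) := mySocSemisimple
    obtain ⟨s, hs1, hs2, hs3⟩ :=
      IsSemisimpleModule.exists_sSupIndep_sSup_simples_eq_top R ↥(moduleSocle R M)
    have hind : iSupIndep ((↑) : s → Submodule R ↥(moduleSocle R M)) := (sSupIndep_iff s).mp hs1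
    refine ⟨↥s, fun i => (i : Submodule R ↥(moduleSocle R M)), hind, ?_,
      fun i => hs3 i i.2, ?_⟩
    · rw [← sSup_eq_iSup']; exact hs2
    · rintro i j hij ⟨g⟩
      refine h2 ⟨i, j, ?_, ?_, ?_, ⟨g⟩⟩
      · exact (isSimpleModule_iff_isAtom.mp (hs3 i i.2)).1
      · exact (isSimpleModule_iff_isAtom.mp (hs3 j j.2)).1
      · exact disjoint_iff.mp (hind.pairwiseDisjoint hij)
  tfae_have 4 → 3 := by
    rintro (h4 | ⟨ι', S, hInd, hSup, hSimple, hNiso⟩)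
    · haveI : Subsingleton ↥(moduleSocle R M) := by rw [h4]; infer_instance
      intro A B C
      exact Subsingleton.elim _ _
    · haveI : IsSemisimpleModule R ↥(moduleSocle R M) := mySocSemisimple
      exact myDist hInd hSup hSimple hNiso
  tfae_finish
end

section
/- Let R be a semiperfect ring and M a finitely generated left R-module. If soc(M) is square-free, then soc(M) is a cyclic module. -/
open DirectSum

universe u v

section AuxProofs

variable {R : Type u} [Ring R]

private lemma simple_isSemisimple {N : Type*} [AddCommGroup N] [Module R N]
    (hN : IsSimpleModule R N) : IsSemisimpleModule R N := by
  haveI := hN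
  constructor

/-- Any simple submodule of a semisimple module generated by a family of simple submodules
is isomorphic to a member of the family. -/
private lemma key_iso {N : Type*} [AddCommGroup N] [Module R N] [IsSemisimpleModule R N]
    {t : Set (Submodule R N)} (htop : sSup t = ⊤)
    (hsimple : ∀ D ∈ t, IsSimpleModule R D)
    (C : Submodule R N) (hC : IsSimpleModule R C) :
    ∃ D ∈ t, Nonempty (C ≃ₗ[R] D) := by
  haveI := hC
  obtain ⟨C', hcompl⟩ := exists_isCompl C
  set π := C.linearProjOfIsCompl C' hcompl with hπdef
  have hπ : ∃ D ∈ t, π.comp D.subtype ≠ 0 := by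
    by_contra hcon
    push_neg at hcon
    have hker : ∀ D ∈ t, D ≤ LinearMap.ker π := by
      intro D hD y hy
      have := LinearMap.congr_fun (hcon D hD) ⟨y, hy⟩
      simpa using this
    have htopker : (⊤ : Submodule R N) ≤ LinearMap.ker π := htop ▸ sSup_le hker
    haveI : Nontrivial C := IsSimpleModule.nontrivial R C
    obtain ⟨c, hc⟩ := exists_ne (0 : C)
    have h1 : π (c : N) = c := Submodule.linearProjOfIsCompl_apply_left hcompl c
    have h2 : π (c : N) = 0 := htopker trivial
    exact hc (by rw [← h1, h2])
  obtain ⟨D, hD, hf⟩ := hπ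
  haveI := hsimple D hD
  exact ⟨D, hD, ⟨(LinearEquiv.ofBijective _ (LinearMap.bijective_of_ne_zero hf)).symm⟩⟩

private lemma socle_isSemisimple (M : Type v) [AddCommGroup M] [Module R M] :
    IsSemisimpleModule R ↥(moduleSocle R M) := by
  have h1 : moduleSocle R M = ⨆ S ∈ {S : Submodule R M | IsSimpleModule R S}, S :=
    sSup_eq_iSup
  rw [h1]
  exact isSemisimpleModule_biSup_of_isSemisimpleModule_submodule
    (fun S hS => simple_isSemisimple hS)

/-- Over a semiperfect ring, there is a finite family of modules containing, up to
isomorphism, every simple module. -/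
private lemma finite_simple_classes (hR : IsSemiperfectRing R) :
    ∃ t : Set (Submodule R (R ⧸ moduleRadical R R)), t.Finite ∧
      ∀ (A : Type v) [AddCommGroup A] [Module R A], IsSimpleModule R A →
        ∃ D ∈ t, Nonempty (A ≃ₗ[R] ↥D) := by
  haveI hQ : IsSemisimpleModule R (R ⧸ moduleRadical R R) := hR.1
  obtain ⟨t, hind, htop, hsimp⟩ :=
    IsSemisimpleModule.exists_sSupIndep_sSup_simples_eq_top R (R ⧸ moduleRadical R R)
  have htfin : t.Finite := WellFoundedGT.finite_of_sSupIndep hind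
  refine ⟨t, htfin, ?_⟩
  intro A _ _ hA
  haveI := hA
  obtain ⟨I, Imax, ⟨e⟩⟩ := (isSimpleModule_iff_quot_maximal (R := R) (M := A)).mp hA
  have hJI : moduleRadical R R ≤ I := sInf_le Imax.out
  obtain ⟨Cc, hCc⟩ := exists_isCompl (Submodule.map (moduleRadical R R).mkQ I)
  let e2 := Submodule.quotientQuotientEquivQuotient (moduleRadical R R) I hJI
  let e3 := Submodule.quotientEquivOfIsCompl _ Cc hCc
  let eAC : A ≃ₗ[R] Cc := e ≪≫ₗ e2.symm ≪≫ₗ e3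
  haveI hCs : IsSimpleModule R Cc := IsSimpleModule.congr eAC.symm
  obtain ⟨D, hD, ⟨e4⟩⟩ := key_iso htop hsimp Cc hCs
  exact ⟨D, hD, ⟨eAC ≪≫ₗ e4⟩⟩

end AuxProofs

theorem statement1 (R : Type u) [Ring R] (hR : IsSemiperfectRing R)
    (M : Type v) [AddCommGroup M] [Module R M] [Module.Finite R M]
    (h : IsSquareFreeModule R ↥(moduleSocle R M)) :
    IsCyclicModule R ↥(moduleSocle R M) := by
  haveI hss : IsSemisimpleModule R ↥(moduleSocle R M) := socle_isSemisimple M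
  obtain ⟨s, hind, htop, hsimp⟩ :=
    IsSemisimpleModule.exists_sSupIndep_sSup_simples_eq_top R ↥(moduleSocle R M)
  have hnb : ∀ A ∈ s, A ≠ ⊥ := fun A hA => (isSimpleModule_iff_isAtom.mp (hsimp A hA)).1
  have hpair : ∀ A ∈ s, ∀ B ∈ s, A ≠ B → ¬ Nonempty (↥A ≃ₗ[R] ↥B) := by
    rintro A hA B hB hne ⟨e⟩
    have hBmem : B ∈ s \ {A} := ⟨hB, fun hBA => hne ((Set.mem_singleton_iff.mp hBA).symm)⟩
    have hdisj : A ⊓ B = ⊥ := ((hind hA).mono_right (le_sSup hBmem)).eq_bot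
    exact h ⟨A, B, hnb A hA, hnb B hB, hdisj, ⟨e⟩⟩
  -- finiteness of the family via the semiperfect hypothesis
  obtain ⟨t, htfin, hcls⟩ :=
    (finite_simple_classes hR :
      ∃ t : Set (Submodule R (R ⧸ moduleRadical R R)), t.Finite ∧
        ∀ (A : Type v) [AddCommGroup A] [Module R A], IsSimpleModule R A →
          ∃ D ∈ t, Nonempty (A ≃ₗ[R] ↥D))
  have hchoose : ∀ A : s, ∃ D ∈ t, Nonempty (↥(A : Submodule R ↥(moduleSocle R M)) ≃ₗ[R] ↥D) :=
    fun A => hcls ↥(A : Submodule R ↥(moduleSocle R M)) (hsimp A.1 A.2)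
  choose F hFt hFiso using hchoose
  have hFinj : Function.Injective F := by
    intro A B hAB
    by_contra hne'
    obtain ⟨eA⟩ := hFiso A
    obtain ⟨eB⟩ := hFiso B
    have eB' : ↥(B : Submodule R ↥(moduleSocle R M)) ≃ₗ[R] ↥(F A) := hAB ▸ eB
    exact hpair A.1 A.2 B.1 B.2 (fun hh => hne' (Subtype.ext hh)) ⟨eA ≪≫ₗ eB'.symm⟩
  classical
  haveI : Finite ↥t := htfin.to_subtype
  haveI hsfinite : Finite s :=
    Finite.of_injective (fun A : s => (⟨F A, hFt A⟩ : t))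
      (fun a b hab => hFinj (congrArg Subtype.val hab))
  haveI : Fintype s := Fintype.ofFinite s
  -- choose a nonzero element in each simple summand
  have hx : ∀ A : s, ∃ y : ↥(moduleSocle R M), y ∈ A.1 ∧ y ≠ 0 :=
    fun A => (Submodule.ne_bot_iff A.1).mp (hnb A.1 A.2)
  choose x hxmem hxne using hx
  set X : ↥(moduleSocle R M) := ∑ A : s, x A with hXdef
  set T := Submodule.span R {X} with hTdef
  have key : ∀ A : s, A.1 ≤ T := by
    intro A
    have hatom : IsAtom A.1 := isSimpleModule_iff_isAtom.mp (hsimp A.1 A.2)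
    set K := sSup (s \ {A.1}) with hKdef
    have hcompl : IsCompl A.1 K := by
      refine ⟨hind A.2, codisjoint_iff.mpr ?_⟩
      rw [hKdef, ← sSup_insert, Set.insert_diff_singleton, Set.insert_eq_self.mpr A.2, htop]
    set π := A.1.linearProjOfIsCompl K hcompl with hπdef
    set π' := A.1.subtype.comp π with hπ'def
    have hXK : X - x A ∈ K := by
      have hsplit : X = x A + ∑ B ∈ Finset.univ.erase A, x B :=
        (Finset.add_sum_erase _ _ (Finset.mem_univ A)).symm
      rw [hsplit, add_sub_cancel_left]
      refine Submodule.sum_mem _ fun B hB => ?_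
      have hBmem : B.1 ∈ s \ {A.1} :=
        ⟨B.2, fun hc => (Finset.mem_erase.mp hB).1 (Subtype.ext (Set.mem_singleton_iff.mp hc))⟩
      exact le_sSup hBmem (hxmem B)
    have hπX : π X = ⟨x A, hxmem A⟩ := by
      have h1 : π (x A) = ⟨x A, hxmem A⟩ :=
        Submodule.linearProjOfIsCompl_apply_left hcompl ⟨x A, hxmem A⟩
      have h2 : π (X - x A) = 0 :=
        Submodule.projectionOnto_apply_of_mem_right hcompl hXK
      have h3 : X = x A + (X - x A) := by abel
      rw [h3, map_add, h1, h2, add_zero]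
    have hπ'X : π' X = x A := by
      rw [hπ'def, LinearMap.comp_apply, hπX]; rfl
    have hmapT : Submodule.map π' T = A.1 := by
      have h1 : Submodule.map π' T = Submodule.span R {x A} := by
        rw [hTdef, Submodule.map_span, Set.image_singleton, hπ'X]
      rw [h1]
      have hle : Submodule.span R {x A} ≤ A.1 :=
        (Submodule.span_singleton_le_iff_mem _ _).mpr (hxmem A)
      have hne : Submodule.span R {x A} ≠ ⊥ := by
        simpa [Submodule.span_singleton_eq_bot] using hxne A
      rcases hatom.le_iff.mp hle with h' | h'
      · exact absurd h' hne
      · exact h'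
    set W := T ⊓ LinearMap.ker π' with hWdef
    have hWT : W ≤ T := inf_le_left
    set W' := Submodule.comap T.subtype W with hW'def
    obtain ⟨U₀, hU₀⟩ := exists_isCompl W'
    set U := Submodule.map T.subtype U₀ with hUdef
    have hUT : U ≤ T := Submodule.map_subtype_le T U₀
    have hUW_sup : U ⊔ W = T := by
      have h4 : U ⊔ W = Submodule.map T.subtype (U₀ ⊔ W') := by
        rw [Submodule.map_sup, hW'def, Submodule.map_comap_subtype, inf_eq_right.mpr hWT]
      rw [h4, sup_comm U₀ W', codisjoint_iff.mp hU₀.codisjoint, Submodule.map_top, Submodule.range_subtype]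
    have hUW_inf : U ⊓ W = ⊥ := by
      rw [eq_bot_iff]
      rintro y hy
      obtain ⟨hyU, hyW⟩ := Submodule.mem_inf.mp hy
      obtain ⟨u, hu, rfl⟩ := hyU
      have h5 : u ∈ W' := by
        rw [hW'def]; exact hyW
      have h6 : u ∈ W' ⊓ U₀ := ⟨h5, hu⟩
      rw [hU₀.inf_eq_bot] at h6
      rw [Submodule.mem_bot] at h6
      simp [h6]
    have hUker : U ⊓ LinearMap.ker π' = ⊥ := by
      have h7 : U ⊓ LinearMap.ker π' ≤ U ⊓ W := by
        rw [hWdef]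
        exact le_inf inf_le_left (le_inf (le_trans inf_le_left hUT) inf_le_right)
      rw [hUW_inf] at h7
      exact le_bot_iff.mp h7
    have hWbot : Submodule.map π' W = ⊥ := by
      refine le_bot_iff.mp ?_
      rintro y ⟨w, hw, rfl⟩
      have : w ∈ LinearMap.ker π' := (inf_le_right : W ≤ _) hw
      simpa using this
    have hmapU : Submodule.map π' U = A.1 := by
      rw [← hmapT, ← hUW_sup, Submodule.map_sup, hWbot, sup_bot_eq]
    have hUbot : U ≠ ⊥ := by
      intro h0
      rw [h0, Submodule.map_bot] at hmapU
      exact hnb A.1 A.2 hmapU.symm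
    have hmem : ∀ u : U, π' u.1 ∈ A.1 := fun u => hmapU ▸ Submodule.mem_map_of_mem u.2
    set f : U →ₗ[R] A.1 := LinearMap.codRestrict A.1 (π'.domRestrict U) hmem with hfdef
    have hfinj : Function.Injective f := by
      intro u v huv
      have h8 : π' u.1 = π' v.1 := congrArg Subtype.val huv
      have h9 : u.1 - v.1 ∈ U ⊓ LinearMap.ker π' := by
        refine Submodule.mem_inf.mpr ⟨sub_mem u.2 v.2, LinearMap.mem_ker.mpr ?_⟩
        rw [map_sub, h8, sub_self]
      rw [hUker, Submodule.mem_bot, sub_eq_zero] at h9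
      exact Subtype.ext h9
    have hfsurj : Function.Surjective f := by
      rintro ⟨a, ha⟩
      rw [← hmapU] at ha
      obtain ⟨u, hu, hu2⟩ := ha
      exact ⟨⟨u, hu⟩, Subtype.ext hu2⟩
    have eUA : (↥U ≃ₗ[R] ↥A.1) := LinearEquiv.ofBijective f ⟨hfinj, hfsurj⟩
    by_cases hcap : U ⊓ A.1 = ⊥
    · exact absurd ⟨U, A.1, hUbot, hnb A.1 A.2, hcap, ⟨eUA⟩⟩ h
    · rcases hatom.le_iff.mp (inf_le_right : U ⊓ A.1 ≤ A.1) with h' | h'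
      · exact absurd h' hcap
      · calc A.1 = U ⊓ A.1 := h'.symm
          _ ≤ U := inf_le_left
          _ ≤ T := hUT
  refine ⟨X, top_le_iff.mp ?_⟩
  rw [← htop]
  exact sSup_le fun A hA => key ⟨A, hA⟩
end

section
/- For a local ring R the following are equivalent: (1) every cyclic left R-module is a direct sum of square-free modules; (2) every cyclic left R-module is a direct sum of uniform modules; (3) R is a left uniserial ring, i.e., the left ideals of R are linearly ordered by inclusion. -/
open DirectSum

universe u v

section AuxAll
open Submodule

section A
variable {R : Type u} [Ring R]

theorem aux_unique_max (hloc : ∃! I : Submodule R R, IsCoatom I) :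
    ∃ m : Submodule R R, IsCoatom m ∧ ∀ I : Submodule R R, I ≠ ⊤ → I ≤ m := by
  obtain ⟨m, hm, huniq⟩ := hloc
  refine ⟨m, hm, fun I hI => ?_⟩
  obtain ⟨m', hm', hle⟩ := Ideal.exists_le_maximal I hI
  rwa [huniq m' (Ideal.isMaximal_def.mp hm')] at hle

theorem aux_local_module (hloc : ∃! I : Submodule R R, IsCoatom I)
    {M : Type v} [AddCommGroup M] [Module R M]
    (hnt : Nontrivial M) (g : M) (hg : span R {g} = ⊤) :
    ∃ mM : Submodule R M, mM ≠ ⊤ ∧ ∀ N : Submodule R M, N ≠ ⊤ → N ≤ mM := by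
  obtain ⟨m, hm, hall⟩ := aux_unique_max hloc
  set φ := LinearMap.toSpanSingleton R M g with hφ
  have hrange : LinearMap.range φ = ⊤ := by
    rw [← LinearMap.span_singleton_eq_range, hg]
  have hg0 : g ≠ 0 := by
    rintro rfl
    obtain ⟨x, hx⟩ := exists_ne (0 : M)
    apply hx
    have : x ∈ span R {(0 : M)} := hg ▸ mem_top
    simpa using this
  refine ⟨map φ m, ?_, ?_⟩
  · intro htop
    have hgmem : g ∈ map φ m := htop ▸ mem_top
    obtain ⟨r, hr, hrg⟩ := hgmem
    have hker : LinearMap.ker φ ≠ ⊤ := by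
      intro h
      have : φ 1 = 0 := by rw [← LinearMap.mem_ker, h]; trivial
      simp [hφ, LinearMap.toSpanSingleton_apply] at this
      exact hg0 this
    have h1r : (1 - r) ∈ LinearMap.ker φ := by
      rw [LinearMap.mem_ker]
      have : φ r = g := hrg
      simp [hφ, LinearMap.toSpanSingleton_apply, sub_smul] at this ⊢
      simp [this]
    have hone : (1 : R) ∈ m := by
      have := add_mem hr (hall _ hker h1r)
      simpa using this
    exact hm.1 (Ideal.eq_top_of_isUnit_mem m hone isUnit_one)
  · intro N hN
    have hc : comap φ N ≠ ⊤ := by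
      intro h
      have hgN : g ∈ N := by
        have : (1 : R) ∈ comap φ N := h ▸ trivial
        simpa [hφ, LinearMap.toSpanSingleton_apply] using this
      exact hN (top_unique (hg ▸ span_le.mpr (Set.singleton_subset_iff.mpr hgN)))
    calc N = map φ (comap φ N) := by rw [Submodule.map_comap_eq, hrange, top_inf_eq]
    _ ≤ map φ m := map_mono (hall _ hc)



theorem aux_no_split (hloc : ∃! I : Submodule R R, IsCoatom I)
    {M : Type v} [AddCommGroup M] [Module R M]
    (c : M) (P Q : Submodule R M) (hPQ : P ⊔ Q = span R {c}) (hd : P ⊓ Q = ⊥)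
    (hP : P ≠ ⊥) (hQ : Q ≠ ⊥) : False := by
  obtain ⟨m, hm, hall⟩ := aux_unique_max hloc
  set φ := LinearMap.toSpanSingleton R M c with hφ
  have hIne : ∀ P' Q' : Submodule R M, P' ⊔ Q' = span R {c} → P' ⊓ Q' = ⊥ → Q' ≠ ⊥ →
      comap φ P' ≠ ⊤ := by
    intro P' Q' h1 h2 h3 htop
    have hc : c ∈ P' := by
      have : (1 : R) ∈ comap φ P' := htop ▸ trivial
      simpa [hφ, LinearMap.toSpanSingleton_apply] using this
    have hQP : Q' ≤ P' := le_trans (le_sup_right.trans h1.le) (span_le.mpr (Set.singleton_subset_iff.mpr hc))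
    apply h3
    rw [← h2, inf_eq_right.mpr hQP]
  have hI := hIne P Q hPQ hd hQ
  have hJ := hIne Q P (by rw [sup_comm]; exact hPQ) (by rw [inf_comm]; exact hd) hP
  have hcmem : c ∈ P ⊔ Q := hPQ ▸ mem_span_singleton_self c
  obtain ⟨p, hp, q, hq, hpq⟩ := mem_sup.mp hcmem
  obtain ⟨r, hr⟩ := mem_span_singleton.mp (hPQ ▸ (le_sup_left : P ≤ P ⊔ Q) hp : p ∈ span R {c})
  obtain ⟨s, hs⟩ := mem_span_singleton.mp (hPQ ▸ (le_sup_right : Q ≤ P ⊔ Q) hq : q ∈ span R {c})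
  have hrI : r ∈ comap φ P := by simp [hφ, LinearMap.toSpanSingleton_apply, hr]; exact hp
  have hsJ : s ∈ comap φ Q := by simp [hφ, LinearMap.toSpanSingleton_apply, hs]; exact hq
  have h3 : (1 - r - s) ∈ comap φ P := by
    have : (1 - r - s) • c = 0 := by
      rw [sub_smul, sub_smul, one_smul, hr, hs, ← hpq]; abel
    simp [hφ, LinearMap.toSpanSingleton_apply, this]
  have hone : (1 : R) ∈ m := by
    have := add_mem (add_mem (hall _ hI hrI) (hall _ hJ hsJ)) (hall _ hI h3)
    simpa using this
  exact hm.1 (Ideal.eq_top_of_isUnit_mem m hone isUnit_one)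

theorem aux_map_inf {M : Type v} {M₂ : Type v} [AddCommGroup M] [Module R M]
    [AddCommGroup M₂] [Module R M₂] (e : M ≃ₗ[R] M₂) (A B : Submodule R M) :
    map (e : M →ₗ[R] M₂) (A ⊓ B) = map (e : M →ₗ[R] M₂) A ⊓ map (e : M →ₗ[R] M₂) B := by
  apply le_antisymm (le_inf (map_mono inf_le_left) (map_mono inf_le_right))
  rintro x ⟨⟨y, hy, rfl⟩, ⟨z, hz, hez⟩⟩
  exact ⟨y, ⟨hy, by rwa [← e.injective hez]⟩, rfl⟩

theorem aux_map_ne_bot {M : Type v} {M₂ : Type v} [AddCommGroup M] [Module R M]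
    [AddCommGroup M₂] [Module R M₂] (e : M ≃ₗ[R] M₂) (A : Submodule R M) (hA : A ≠ ⊥) :
    map (e : M →ₗ[R] M₂) A ≠ ⊥ := by
  intro h
  apply hA
  rw [eq_bot_iff]
  intro x hx
  have hmem : (e : M →ₗ[R] M₂) x ∈ map (e : M →ₗ[R] M₂) A := ⟨x, hx, rfl⟩
  rw [h, mem_bot] at hmem
  have : x = 0 := e.injective (by simpa using hmem)
  simpa [mem_bot] using this
end A

section AuxC
open Submodule
variable {R : Type u} [Ring R]

theorem aux_sqfree_equiv {M : Type v} {M₂ : Type v} [AddCommGroup M] [Module R M]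
    [AddCommGroup M₂] [Module R M₂] (e : M ≃ₗ[R] M₂)
    (h : IsSquareFreeModule R M) : IsSquareFreeModule R M₂ := by
  rintro ⟨A, B, hA, hB, hAB, ⟨f⟩⟩
  refine h ⟨map (e.symm : M₂ →ₗ[R] M) A, map (e.symm : M₂ →ₗ[R] M) B,
    aux_map_ne_bot e.symm A hA, aux_map_ne_bot e.symm B hB, ?_, ?_⟩
  · rw [← aux_map_inf e.symm A B, hAB]; simp
  · exact ⟨((e.symm.submoduleMap A).symm.trans f).trans (e.symm.submoduleMap B)⟩

theorem aux_uniform_equiv {M : Type v} {M₂ : Type v} [AddCommGroup M] [Module R M]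
    [AddCommGroup M₂] [Module R M₂] (e : M ≃ₗ[R] M₂)
    (h : IsUniformModule R M) : IsUniformModule R M₂ := by
  obtain ⟨hnt, h2⟩ := h
  haveI := hnt
  refine ⟨e.symm.toEquiv.nontrivial, fun A B hA hB hAB => ?_⟩
  refine h2 _ _ (aux_map_ne_bot e.symm A hA) (aux_map_ne_bot e.symm B hB) ?_
  rw [← aux_map_inf e.symm A B, hAB]; simp

theorem aux_uniserial_of_cyclic (h3 : ∀ I J : Submodule R R, I ≤ J ∨ J ≤ I)
    {M : Type v} [AddCommGroup M] [Module R M] (hcyc : IsCyclicModule R M) :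
    IsUniserialModule R M := by
  obtain ⟨g, hg⟩ := hcyc
  intro A B
  set φ := LinearMap.toSpanSingleton R M g with hφ
  have hrange : LinearMap.range φ = ⊤ := by rw [← LinearMap.span_singleton_eq_range, hg]
  have key : ∀ N : Submodule R M, map φ (comap φ N) = N := fun N => by
    rw [Submodule.map_comap_eq, hrange, top_inf_eq]
  rcases h3 (comap φ A) (comap φ B) with h | h
  · exact Or.inl (by rw [← key A, ← key B]; exact map_mono h)
  · exact Or.inr (by rw [← key A, ← key B]; exact map_mono h)

theorem aux_sqfree_of_uniserial {M : Type v} [AddCommGroup M] [Module R M]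
    (h : IsUniserialModule R M) : IsSquareFreeModule R M := by
  rintro ⟨A, B, hA, hB, hAB, -⟩
  rcases h A B with hle | hle
  · exact hA (by rw [← inf_eq_left.mpr hle, hAB])
  · exact hB (by rw [← inf_eq_right.mpr hle, hAB])

theorem aux_uniform_of_uniserial {M : Type v} [AddCommGroup M] [Module R M]
    (hnt : Nontrivial M) (h : IsUniserialModule R M) : IsUniformModule R M := by
  refine ⟨hnt, fun A B hA hB hAB => ?_⟩
  rcases h A B with hle | hle
  · exact hA (by rw [← inf_eq_left.mpr hle, hAB])
  · exact hB (by rw [← inf_eq_right.mpr hle, hAB])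

theorem aux_dsum_subsingleton (M : Type v) [AddCommGroup M] [Module R M] [Subsingleton M]
    (P : Submodule R M → Prop) : IsDirectSumOf R M P :=
  ⟨PEmpty, fun i => i.elim, fun i => i.elim,
    by rw [iSup_of_empty]; exact Subsingleton.elim _ _, fun i => i.elim⟩

theorem aux_dsum_top {M : Type v} [AddCommGroup M] [Module R M]
    {P : Submodule R M → Prop} (hP : P ⊤) : IsDirectSumOf R M P := by
  refine ⟨PUnit, fun _ => ⊤, fun i => ?_, by simp, fun _ => hP⟩
  have hb : (⨆ j, ⨆ (_ : j ≠ i), (⊤ : Submodule R M)) = ⊥ :=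
    iSup_eq_bot.mpr fun j => iSup_neg (by simp [Subsingleton.elim j i])
  rw [hb]
  exact disjoint_bot_right

theorem aux_decomp_top (hloc : ∃! I : Submodule R R, IsCoatom I)
    {M : Type v} [AddCommGroup M] [Module R M]
    (hcyc : IsCyclicModule R M) (hnt : Nontrivial M)
    {ι : Type v} (N : ι → Submodule R M) (hsup : iSup N = ⊤) :
    ∃ i, N i = ⊤ := by
  obtain ⟨g, hg⟩ := hcyc
  obtain ⟨mM, hmM, hall⟩ := aux_local_module hloc hnt g hg
  by_contra h
  push_neg at h
  exact hmM (top_unique (hsup ▸ iSup_le fun i => hall _ (h i)))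

theorem aux_all_sqfree {R : Type u} [Ring R] (hloc : ∃! I : Submodule R R, IsCoatom I)
    (h1 : ∀ (M : Type u) [AddCommGroup M] [Module R M], IsCyclicModule R M →
      IsDirectSumOf R M (fun N => IsSquareFreeModule R ↥N))
    (M : Type u) [AddCommGroup M] [Module R M] (hcyc : IsCyclicModule R M) :
    IsSquareFreeModule R M := by
  rcases subsingleton_or_nontrivial M with hs | hnt
  · rintro ⟨A, B, hA, hB, -, -⟩; exact hA (Subsingleton.elim _ _)
  · obtain ⟨ι, N, hind, hsup, hP⟩ := h1 M hcyc
    obtain ⟨i, hi⟩ := aux_decomp_top hloc hcyc hnt N hsup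
    have hsq := hP i
    rw [hi] at hsq
    exact aux_sqfree_equiv Submodule.topEquiv hsq

theorem aux_all_uniform {R : Type u} [Ring R] (hloc : ∃! I : Submodule R R, IsCoatom I)
    (h2 : ∀ (M : Type u) [AddCommGroup M] [Module R M], IsCyclicModule R M →
      IsDirectSumOf R M (fun N => IsUniformModule R ↥N))
    (M : Type u) [AddCommGroup M] [Module R M] (hcyc : IsCyclicModule R M)
    (hnt : Nontrivial M) : IsUniformModule R M := by
  obtain ⟨ι, N, hind, hsup, hP⟩ := h2 M hcyc
  obtain ⟨i, hi⟩ := aux_decomp_top hloc hcyc hnt N hsup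
  have hu := hP i
  rw [hi] at hu
  exact aux_uniform_equiv Submodule.topEquiv hu

theorem aux_cyclic_quot {M : Type v} [AddCommGroup M] [Module R M]
    (hcyc : IsCyclicModule R M) (p : Submodule R M) : IsCyclicModule R (M ⧸ p) := by
  obtain ⟨g, hg⟩ := hcyc
  exact ⟨p.mkQ g, by
    rw [← Set.image_singleton, ← Submodule.map_span, hg, Submodule.map_top, Submodule.range_mkQ]⟩

theorem aux_cyclic_self : IsCyclicModule R R :=
  ⟨1, by simpa using Ideal.span_singleton_one (α := R)⟩

end AuxC
section AuxD
open Submodule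
variable {R : Type u} [Ring R]

theorem aux_S1 {a b : R} {K : Submodule R R} (hK : K = span R {a} ⊓ span R {b})
    (r s : R) (h : r • K.mkQ a = s • K.mkQ b) : r • K.mkQ a = 0 := by
  have h' : K.mkQ (r • a) = K.mkQ (s • b) :=
    (map_smul K.mkQ r a).trans (h.trans (map_smul K.mkQ s b).symm)
  have hm : r • a - s • b ∈ K := by
    rw [Submodule.mkQ_apply, Submodule.mkQ_apply] at h'
    exact (Submodule.Quotient.eq K).mp h'
  rw [hK] at hm
  have h1 : r • a ∈ span R {b} := by
    have heq : r • a = (r • a - s • b) + s • b := by abel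
    rw [heq]
    exact add_mem (mem_inf.mp hm).2 (smul_mem _ s (mem_span_singleton_self b))
  have h2 : r • a ∈ K := by
    rw [hK]
    exact mem_inf.mpr ⟨smul_mem _ r (mem_span_singleton_self a), h1⟩
  have : K.mkQ (r • a) = 0 := by rwa [Submodule.mkQ_apply, Submodule.Quotient.mk_eq_zero]
  rw [← map_smul]
  exact this

theorem aux_nz {a b : R} {K : Submodule R R} (hK : K = span R {a} ⊓ span R {b})
    (ha : a ∉ span R {b}) : K.mkQ a ≠ 0 := by
  intro h
  rw [Submodule.mkQ_apply, Submodule.Quotient.mk_eq_zero, hK] at h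
  exact ha (mem_inf.mp h).2

theorem aux_not_uniserial_pair {I J : Submodule R R} (hIJ : ¬ I ≤ J) (hJI : ¬ J ≤ I) :
    ∃ a b : R, a ∉ span R {b} ∧ b ∉ span R {a} := by
  obtain ⟨a, haI, haJ⟩ := SetLike.not_le_iff_exists.mp hIJ
  obtain ⟨b, hbJ, hbI⟩ := SetLike.not_le_iff_exists.mp hJI
  exact ⟨a, b, fun h => haJ (span_le.mpr (Set.singleton_subset_iff.mpr hbJ) h),
    fun h => hbI (span_le.mpr (Set.singleton_subset_iff.mpr haI) h)⟩

theorem aux_23 (hloc : ∃! I : Submodule R R, IsCoatom I)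
    (h2 : ∀ (M : Type u) [AddCommGroup M] [Module R M], IsCyclicModule R M →
      Nontrivial M → IsUniformModule R M) :
    ∀ I J : Submodule R R, I ≤ J ∨ J ≤ I := by
  intro I J
  by_contra hc
  push_neg at hc
  obtain ⟨a, b, ha, hb⟩ := aux_not_uniserial_pair hc.1 hc.2
  set K := span R {a} ⊓ span R {b} with hK
  have hqa : K.mkQ a ≠ 0 := aux_nz hK ha
  have hqb : K.mkQ b ≠ 0 := aux_nz (by rw [hK, inf_comm]) hb
  have hnt : Nontrivial (R ⧸ K) := ⟨⟨K.mkQ a, 0, hqa⟩⟩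
  have hcyc : IsCyclicModule R (R ⧸ K) := aux_cyclic_quot aux_cyclic_self K
  obtain ⟨-, hu⟩ := h2 _ hcyc hnt
  have hA : span R {K.mkQ a} ≠ ⊥ :=
    fun h => hqa ((mem_bot R).mp (h ▸ mem_span_singleton_self _))
  have hB : span R {K.mkQ b} ≠ ⊥ :=
    fun h => hqb ((mem_bot R).mp (h ▸ mem_span_singleton_self _))
  refine hu (span R {K.mkQ a}) (span R {K.mkQ b}) hA hB ?_
  rw [eq_bot_iff]
  intro x hx
  obtain ⟨hxA, hxB⟩ := mem_inf.mp hx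
  obtain ⟨r, hr⟩ := mem_span_singleton.mp hxA
  obtain ⟨s, hs⟩ := mem_span_singleton.mp hxB
  rw [mem_bot, ← hr]
  exact aux_S1 hK r s (hr.trans hs.symm)

theorem aux_13 (hloc : ∃! I : Submodule R R, IsCoatom I)
    (h1 : ∀ (M : Type u) [AddCommGroup M] [Module R M], IsCyclicModule R M →
      IsSquareFreeModule R M) :
    ∀ I J : Submodule R R, I ≤ J ∨ J ≤ I := by
  intro I J
  by_contra hcont
  push_neg at hcont
  obtain ⟨a, b, ha, hb⟩ := aux_not_uniserial_pair hcont.1 hcont.2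
  set K := span R {a} ⊓ span R {b} with hK
  set qa : R ⧸ K := K.mkQ a with hqa_def
  set qb : R ⧸ K := K.mkQ b with hqb_def
  set c : R ⧸ K := qa + qb with hc
  set A : Submodule R (R ⧸ K) := span R {qa} with hA
  set B : Submodule R (R ⧸ K) := span R {qb} with hB
  set C : Submodule R (R ⧸ K) := span R {c} with hC
  set P : Submodule R (R ⧸ K) := C ⊓ A with hP
  set Q : Submodule R (R ⧸ K) := C ⊓ B with hQ
  set d : Submodule R (R ⧸ K) := P ⊔ Q with hd
  have S1 : ∀ r s : R, r • qa = s • qb → r • qa = 0 := fun r s h => aux_S1 hK r s h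
  have S0 : ∀ x : R ⧸ K, x ∈ A → x ∈ B → x = 0 := by
    intro x hxA hxB
    obtain ⟨r, hr⟩ := mem_span_singleton.mp hxA
    obtain ⟨s, hs⟩ := mem_span_singleton.mp hxB
    rw [← hr]
    exact S1 r s (hr.trans hs.symm)
  have hqa0 : qa ≠ 0 := aux_nz hK ha
  have hqb0 : qb ≠ 0 := aux_nz (by rw [hK, inf_comm]) hb
  have haA : qa ∈ A := mem_span_singleton_self qa
  have hbB : qb ∈ B := mem_span_singleton_self qb
  have hcC : c ∈ C := mem_span_singleton_self c
  -- S4 : projection to P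
  have S4 : ∀ x : R ⧸ K, x ∈ d → x ∈ A → x ∈ P := by
    intro x hxd hxA
    obtain ⟨p, hp, q', hq', hsum⟩ := mem_sup.mp hxd
    have hpA : p ∈ A := (mem_inf.mp hp).2
    have hq'A : q' ∈ A := by
      have hq'eq : q' = x - p := by rw [← hsum]; abel
      rw [hq'eq]; exact sub_mem hxA hpA
    have hq'0 : q' = 0 := S0 q' hq'A (mem_inf.mp hq').2
    have hxp : x = p := by rw [← hsum, hq'0, add_zero]
    rw [hxp]; exact hp
  -- S5 : c ∉ d
  have S5 : c ∉ d := by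
    intro hcd
    obtain ⟨p, hp, q', hq', hsum⟩ := mem_sup.mp hcd
    have h1' : qa - p ∈ A := sub_mem haA (mem_inf.mp hp).2
    have h2' : qa - p ∈ B := by
      have heq : qa - p = q' - qb := by
        rw [sub_eq_sub_iff_add_eq_add, ← hc, ← hsum]; abel
      rw [heq]; exact sub_mem (mem_inf.mp hq').2 hbB
    have h0 : qa = p := sub_eq_zero.mp (S0 _ h1' h2')
    have hqaP : qa ∈ P := by rw [h0]; exact hp
    have hqbQ : qb ∈ Q := by
      have hqbq' : qb = q' := by
        apply add_left_cancel (a := p)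
        rw [hsum, hc, h0]
      rw [hqbq']; exact hq'
    have hPQtop : P ⊔ Q = C := by
      apply le_antisymm (sup_le inf_le_left inf_le_left)
      rw [hC]
      apply span_le.mpr
      rw [Set.singleton_subset_iff, hc]
      exact add_mem (mem_sup_left hqaP) (mem_sup_right hqbQ)
    have hPQbot : P ⊓ Q = ⊥ := by
      rw [eq_bot_iff]
      intro x hx
      rw [mem_bot]
      exact S0 x (mem_inf.mp (mem_inf.mp hx).1).2 (mem_inf.mp (mem_inf.mp hx).2).2
    have hPne : P ≠ ⊥ := fun h => hqa0 ((mem_bot R).mp (h ▸ hqaP))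
    have hQne : Q ≠ ⊥ := fun h => hqb0 ((mem_bot R).mp (h ▸ hqbQ))
    exact aux_no_split hloc c P Q hPQtop hPQbot hPne hQne
  -- S8 : qa ∉ d
  have S8 : qa ∉ d := by
    intro hqad
    have hqaP : qa ∈ P := S4 qa hqad haA
    have hqaC : qa ∈ C := (mem_inf.mp hqaP).1
    have hqbC : qb ∈ C := by
      have hv : qb = c - qa := by rw [hc]; abel
      rw [hv]; exact sub_mem hcC hqaC
    have hqbQ : qb ∈ Q := mem_inf.mpr ⟨hqbC, hbB⟩
    exact S5 (by rw [hc]; exact add_mem (mem_sup_left hqaP) (mem_sup_right hqbQ))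
  -- S6 : annihilator equality
  have S6 : ∀ r : R, r • qa ∈ d ↔ r • c ∈ d := by
    intro r
    constructor
    · intro h
      have hP' : r • qa ∈ P := S4 _ h (smul_mem A r haA)
      obtain ⟨s, hs⟩ := mem_span_singleton.mp (mem_inf.mp hP').1
      have heq : (r - s) • qa = s • qb := by
        rw [hc, smul_add] at hs
        rw [sub_smul, ← hs]; abel
      have h0 : (r - s) • qa = 0 := S1 _ _ heq
      have hsqb : s • qb = 0 := by rw [← heq, h0]
      have hrqbC : r • qb ∈ C := by
        have hv : r • qb = (r - s) • c := by
          rw [hc, smul_add, h0, zero_add, sub_smul, hsqb, sub_zero]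
        rw [hv]; exact smul_mem _ _ hcC
      have hrqbQ : r • qb ∈ Q := mem_inf.mpr ⟨hrqbC, smul_mem B r hbB⟩
      have hv2 : r • c = r • qa + r • qb := by rw [hc, smul_add]
      rw [hv2]
      exact add_mem (mem_sup_left hP') (mem_sup_right hrqbQ)
    · intro h
      obtain ⟨p, hp, q', hq', hsum⟩ := mem_sup.mp h
      have h1' : r • qa - p ∈ A := sub_mem (smul_mem _ _ haA) (mem_inf.mp hp).2
      have h2' : r • qa - p ∈ B := by
        have heq : r • qa - p = q' - r • qb := by
          rw [sub_eq_sub_iff_add_eq_add, ← smul_add, ← hc, ← hsum]; abel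
        rw [heq]; exact sub_mem (mem_inf.mp hq').2 (smul_mem _ _ hbB)
      have h0 : r • qa = p := sub_eq_zero.mp (S0 _ h1' h2')
      rw [h0]
      exact mem_sup_left hp
  -- pass to the second quotient
  have hmem_d : ∀ x : R ⧸ K, d.mkQ x = 0 ↔ x ∈ d := by
    intro x
    rw [Submodule.mkQ_apply, Submodule.Quotient.mk_eq_zero]
  have hmem_d' : ∀ (r : R) (x : R ⧸ K), r • d.mkQ x = 0 ↔ r • x ∈ d := by
    intro r x
    have hv : r • d.mkQ x = d.mkQ (r • x) := (map_smul d.mkQ r x).symm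
    rw [hv, Submodule.mkQ_apply, Submodule.Quotient.mk_eq_zero]
  have hw0 : d.mkQ qa ≠ 0 := fun h => S8 ((hmem_d qa).mp h)
  have hu0 : d.mkQ c ≠ 0 := fun h => S5 ((hmem_d c).mp h)
  have hXne : span R {d.mkQ qa} ≠ ⊥ :=
    fun h => hw0 ((mem_bot R).mp (h ▸ mem_span_singleton_self _))
  have hZne : span R {d.mkQ c} ≠ ⊥ :=
    fun h => hu0 ((mem_bot R).mp (h ▸ mem_span_singleton_self _))
  -- X ⊓ Z = ⊥
  have hXZ : span R {d.mkQ qa} ⊓ span R {d.mkQ c} = ⊥ := by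
    rw [eq_bot_iff]
    intro x hx
    obtain ⟨hxX, hxZ⟩ := mem_inf.mp hx
    obtain ⟨r, hr⟩ := mem_span_singleton.mp hxX
    obtain ⟨s, hs⟩ := mem_span_singleton.mp hxZ
    have hd1 : r • qa - s • c ∈ d := by
      rw [← hmem_d, map_sub, map_smul, map_smul, hr, hs, sub_self]
    obtain ⟨p, hp, q', hq', hsum⟩ := mem_sup.mp hd1
    have h2' : p + q' = r • qa - (s • qa + s • qb) := by rw [hsum, hc, smul_add]
    have hpv : p = r • qa - (s • qa + s • qb) - q' := by rw [← h2']; abel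
    have key : (r - s) • qa - p = s • qb + q' := by rw [hpv, sub_smul]; abel
    have e1 : (r - s) • qa - p ∈ A := sub_mem (smul_mem _ _ haA) (mem_inf.mp hp).2
    have e2 : (r - s) • qa - p ∈ B := by
      rw [key]; exact add_mem (smul_mem _ _ hbB) (mem_inf.mp hq').2
    have e0 : (r - s) • qa - p = 0 := S0 _ e1 e2
    have hrs : (r - s) • qa ∈ P := by
      rw [sub_eq_zero.mp e0]; exact hp
    have hsqbv : s • qb = -q' := eq_neg_of_add_eq_zero_left (key.symm.trans e0)
    have hsqbQ : s • qb ∈ Q := by rw [hsqbv]; exact neg_mem hq'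
    obtain ⟨t, ht⟩ := mem_span_singleton.mp (mem_inf.mp hsqbQ).1
    have heq2 : t • qa = (s - t) • qb := by
      rw [hc, smul_add] at ht
      rw [sub_smul, ← ht]; abel
    have ht0 : t • qa = 0 := S1 _ _ heq2
    have hstqb : (s - t) • qb = 0 := by rw [← heq2, ht0]
    have hsqaC : s • qa ∈ C := by
      have hv : s • qa = (s - t) • c := by
        rw [hc, smul_add, hstqb, add_zero, sub_smul, ht0, sub_zero]
      rw [hv]; exact smul_mem _ _ hcC
    have hsqaP : s • qa ∈ P := mem_inf.mpr ⟨hsqaC, smul_mem _ _ haA⟩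
    have hrd : r • qa ∈ d := by
      have hv2 : r • qa = (r - s) • qa + s • qa := by rw [sub_smul]; abel
      rw [hv2]; exact add_mem (mem_sup_left hrs) (mem_sup_left hsqaP)
    rw [mem_bot, ← hr, ← map_smul]
    exact (hmem_d _).mpr hrd
  -- the isomorphism
  have hker : LinearMap.ker (LinearMap.toSpanSingleton R ((R ⧸ K) ⧸ d) (d.mkQ qa)) =
      LinearMap.ker (LinearMap.toSpanSingleton R ((R ⧸ K) ⧸ d) (d.mkQ c)) := by
    ext r
    simp only [LinearMap.mem_ker, LinearMap.toSpanSingleton_apply]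
    rw [hmem_d' r qa, hmem_d' r c]
    exact S6 r
  have hiso : Nonempty (↥(span R {d.mkQ qa}) ≃ₗ[R] ↥(span R {d.mkQ c})) :=
    ⟨(LinearEquiv.ofEq _ _ (LinearMap.span_singleton_eq_range R _ (d.mkQ qa))).trans
      (((((LinearMap.toSpanSingleton R _ (d.mkQ qa)).quotKerEquivRange.symm.trans
        (Submodule.quotEquivOfEq _ _ hker)).trans
        (LinearMap.toSpanSingleton R _ (d.mkQ c)).quotKerEquivRange)).trans
      (LinearEquiv.ofEq _ _ (LinearMap.span_singleton_eq_range R _ (d.mkQ c)).symm))⟩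
  have hsq : IsSquareFreeModule R ((R ⧸ K) ⧸ d) :=
    h1 _ (aux_cyclic_quot (aux_cyclic_quot aux_cyclic_self K) d)
  exact hsq ⟨_, _, hXne, hZne, hXZ, hiso⟩

end AuxD

end AuxAll

theorem statement17 (R : Type u) [Ring R] (hloc : ∃! I : Submodule R R, IsCoatom I) :
    List.TFAE [
      -- (1) every cyclic left module is a direct sum of square-free modules
      ∀ (M : Type u) [AddCommGroup M] [Module R M], IsCyclicModule R M →
        IsDirectSumOf R M (fun N => IsSquareFreeModule R ↥N),
      -- (2) every cyclic left module is a direct sum of uniform modules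
      ∀ (M : Type u) [AddCommGroup M] [Module R M], IsCyclicModule R M →
        IsDirectSumOf R M (fun N => IsUniformModule R ↥N),
      -- (3) R is a left uniserial ring
      ∀ I J : Submodule R R, I ≤ J ∨ J ≤ I
    ] := by
  tfae_have 1 → 3 := fun h1 =>
    aux_13 hloc (fun M _ _ hcyc => aux_all_sqfree hloc h1 M hcyc)
  tfae_have 2 → 3 := fun h2 =>
    aux_23 hloc (fun M _ _ hcyc hnt => aux_all_uniform hloc h2 M hcyc hnt)
  tfae_have 3 → 1 := by
    intro h3 M _ _ hcyc
    rcases subsingleton_or_nontrivial M with hs | hnt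
    · exact aux_dsum_subsingleton M _
    · exact aux_dsum_top (aux_sqfree_equiv Submodule.topEquiv.symm
        (aux_sqfree_of_uniserial (aux_uniserial_of_cyclic h3 hcyc)))
  tfae_have 3 → 2 := by
    intro h3 M _ _ hcyc
    rcases subsingleton_or_nontrivial M with hs | hnt
    · exact aux_dsum_subsingleton M _
    · exact aux_dsum_top (aux_uniform_equiv Submodule.topEquiv.symm
        (aux_uniform_of_uniserial hnt (aux_uniserial_of_cyclic h3 hcyc)))
  tfae_finish
end
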